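/- arXiv:2304.07833 — 4 statements merged into one kernel-verified Lean document; each statement's English description precedes it below -/
import Mathlib

section
/- Let X ⊂ ℝ³ be a discrete set such that the translates C₃ + x, x ∈ X, cover ℝ³, and suppose some point of P is covered and that at least 28 translates C₃ + xᵢ meet a fixed translate C₃ + x₀ containing the origin. Then the density ∑_{x∈X} vol(P ∩ (C₃+x)) / vol(P) is at least 1 + 1/96, where P = conv{(±8,0,0),(0,±8,0),(0,0,±8),(8,8,8),(-8,-8,-8)}. -/
open Set Pointwise MeasureTheory ENNReal

/-- The regular octahedron `C₃` (the ℓ¹-ball of radius 2 in ℝ³). -/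
def C₃ : Set (Fin 3 → ℝ) := {p | |p 0| + |p 1| + |p 2| ≤ 2}

/-- The parallelohedron `P`, the convex hull of the eight listed points. -/
def P : Set (Fin 3 → ℝ) :=
  convexHull ℝ
    {![8, 0, 0], ![-8, 0, 0], ![0, 8, 0], ![0, -8, 0],
     ![0, 0, 8], ![0, 0, -8], ![8, 8, 8], ![-8, -8, -8]}

/-!
The translates `C₃ + y` meeting `C₃ + x₀` lie in the ℓ¹-ball `B` of radius 6 about `x₀`, which
has volume 288 and lies in `P`: `x₀` is within ℓ¹-distance 2 of the origin, and `P` contains the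
ℓ¹-ball of radius 8 about the origin. The translates cover `P \ B`, which contributes at least
`vol P - 288 = 736` to the density sum, and inside `B` the 28 translates contribute `28 · 32/3`.
Since `P` is a parallelepiped of volume 1024, the density is at least
`(736 + 896/3) / 1024 = 1 + 1/96`.
-/

lemma measure_sdiff_add_sum_le_tsum_measure_inter {α ι : Type*} [MeasurableSpace α]
    [Countable ι] (μ : Measure α) {A B : Set α} (hB : MeasurableSet B) {s : ι → Set α}
    (hcov : A \ B ⊆ ⋃ i, s i) (F : Finset ι) (hF : ∀ i ∈ F, s i ⊆ A ∩ B) :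
    μ (A \ B) + ∑ i ∈ F, μ (s i) ≤ ∑' i, μ (A ∩ s i) := by
  have hcovB : A \ B ⊆ ⋃ i, (A ∩ s i) \ B := fun p hp => by
    obtain ⟨i, hi⟩ := mem_iUnion.1 (hcov hp)
    exact mem_iUnion.2 ⟨i, ⟨hp.1, hi⟩, hp.2⟩
  have hFB : ∀ i ∈ F, A ∩ s i ∩ B = s i := fun i hi =>
    subset_antisymm (inter_subset_left.trans inter_subset_right)
      fun p hp => ⟨⟨(hF i hi hp).1, hp⟩, (hF i hi hp).2⟩
  calc μ (A \ B) + ∑ i ∈ F, μ (s i)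
      ≤ ∑' i, μ ((A ∩ s i) \ B) + ∑' i, μ (A ∩ s i ∩ B) := by
        gcongr
        · exact (measure_mono hcovB).trans (measure_iUnion_le _)
        · rw [← Finset.sum_congr rfl fun i hi => congrArg μ (hFB i hi)]
          exact ENNReal.sum_le_tsum F
    _ = ∑' i, μ (A ∩ s i) := by
        rw [← ENNReal.tsum_add]
        exact tsum_congr fun i => by rw [add_comm, measure_inter_add_sdiff _ hB]

section l1Ball

variable {ι : Type*} [Fintype ι]

def l1Ball (c : ι → ℝ) (r : ℝ) : Set (ι → ℝ) := {p | ∑ i, |p i - c i| ≤ r}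

lemma mem_l1Ball_comm {a b : ι → ℝ} {r : ℝ} : a ∈ l1Ball b r ↔ b ∈ l1Ball a r := by
  simp only [l1Ball, mem_ofPred_eq, abs_sub_comm]

lemma l1Ball_subset_l1Ball {c c' : ι → ℝ} {r r' s : ℝ} (hc : c ∈ l1Ball c' s)
    (h : s + r ≤ r') : l1Ball c r ⊆ l1Ball c' r' := fun p hp => by
  have := Finset.sum_le_sum fun i (_ : i ∈ Finset.univ) => abs_sub_le (p i) (c i) (c' i)
  simp only [l1Ball, mem_ofPred_eq, Finset.sum_add_distrib] at hc hp this ⊢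
  linarith

lemma mem_l1Ball_of_inter_nonempty {c c' : ι → ℝ} {r r' : ℝ}
    (h : (l1Ball c r ∩ l1Ball c' r').Nonempty) : c ∈ l1Ball c' (r + r') := by
  obtain ⟨p, hp, hp'⟩ := h
  rw [mem_l1Ball_comm] at hp
  have := Finset.sum_le_sum fun i (_ : i ∈ Finset.univ) => abs_sub_le (c i) (p i) (c' i)
  simp only [l1Ball, mem_ofPred_eq, Finset.sum_add_distrib] at hp hp' this ⊢
  linarith

lemma measurableSet_l1Ball (c : ι → ℝ) (r : ℝ) : MeasurableSet (l1Ball c r) :=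
  (isClosed_le (by fun_prop) continuous_const).measurableSet

lemma vadd_l1Ball (x c : ι → ℝ) (r : ℝ) : x +ᵥ l1Ball c r = l1Ball (x + c) r := by
  ext p
  simp [mem_vadd_set_iff_neg_vadd_mem, l1Ball, sub_add_eq_sub_sub, neg_add_eq_sub]

lemma volume_l1Ball [Nonempty ι] (c : ι → ℝ) (r : ℝ) :
    volume (l1Ball c r) = ENNReal.ofReal r ^ Fintype.card ι *
      ENNReal.ofReal (2 ^ Fintype.card ι / (Fintype.card ι).factorial) := by
  have h := volume_sum_rpow_le ι le_rfl r
  simp only [Real.rpow_one, div_one, one_add_one_eq_two, Real.Gamma_two, mul_one] at h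
  rw [Real.Gamma_nat_eq_factorial] at h
  rw [← h, ← add_zero c, ← vadd_l1Ball, measure_vadd]
  simp [l1Ball]

end l1Ball

lemma volume_l1Ball_fin_three (c : Fin 3 → ℝ) {r : ℝ} (hr : 0 ≤ r) :
    volume (l1Ball c r) = ENNReal.ofReal (4 / 3 * r ^ 3) := by
  rw [volume_l1Ball, ← ENNReal.ofReal_pow hr, ← ENNReal.ofReal_mul (by positivity)]
  norm_num [mul_comm]

lemma C₃_eq_l1Ball : C₃ = l1Ball 0 2 := by
  ext p
  simp [C₃, l1Ball, Fin.sum_univ_three]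

lemma vadd_C₃ (x : Fin 3 → ℝ) : x +ᵥ C₃ = l1Ball x 2 := by
  rw [C₃_eq_l1Ball, vadd_l1Ball, add_zero]

lemma volume_C₃ : volume C₃ = ENNReal.ofReal (32 / 3) := by
  rw [C₃_eq_l1Ball, volume_l1Ball_fin_three _ zero_le_two]
  norm_num

/-- Sends the vertices of `P` to the vertices `{±8}³` of a cube. -/
def cubeCoords : (Fin 3 → ℝ) →ₗ[ℝ] (Fin 3 → ℝ) :=
  Matrix.toLin' !![1, 1, -1; 1, -1, 1; -1, 1, 1]

lemma cubeCoords_apply (p : Fin 3 → ℝ) :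
    cubeCoords p = ![p 0 + p 1 - p 2, p 0 - p 1 + p 2, -p 0 + p 1 + p 2] := by
  ext i
  fin_cases i <;> simp [cubeCoords, Matrix.mulVec, dotProduct, Fin.sum_univ_three] <;> ring

lemma det_cubeCoords : LinearMap.det cubeCoords = -4 := by
  simp [cubeCoords, LinearMap.det_toLin', Matrix.det_fin_three]
  norm_num

lemma convexHull_pi_pair_eq_pi_Icc {ι : Type*} [Finite ι] {a b : ℝ} (hab : a ≤ b) :
    convexHull ℝ (univ.pi fun _ : ι => ({a, b} : Set ℝ)) = univ.pi fun _ => Icc a b := by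
  simp [convexHull_pair, segment_eq_Icc hab]

lemma P_eq_preimage_cube : P = cubeCoords ⁻¹' univ.pi fun _ => Icc (-8) 8 := by
  refine subset_antisymm (convexHull_min ?_ ?_) fun p hp => ?_
  · intro v hv
    simp only [mem_insert_iff, mem_singleton_iff] at hv
    rcases hv with rfl | rfl | rfl | rfl | rfl | rfl | rfl | rfl <;>
      simp [cubeCoords_apply, Pi.le_def, Fin.forall_fin_succ]
  · exact (convex_pi fun _ _ => convex_Icc _ _).linear_preimage cubeCoords
  · let inv : (Fin 3 → ℝ) →ₗ[ℝ] (Fin 3 → ℝ) :=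
      Matrix.toLin' !![1/2, 1/2, 0; 1/2, 0, 1/2; 0, 1/2, 1/2]
    have inv_apply (v : Fin 3 → ℝ) :
        inv v = ![(v 0 + v 1) / 2, (v 0 + v 2) / 2, (v 1 + v 2) / 2] := by
      ext i
      fin_cases i <;> simp [inv, Matrix.mulVec, dotProduct, Fin.sum_univ_three] <;> ring
    have hp_eq : p = inv (cubeCoords p) := by
      ext i
      fin_cases i <;> simp [inv_apply, cubeCoords_apply] <;> ring
    rw [← convexHull_pi_pair_eq_pi_Icc (by norm_num)] at hp
    rw [hp_eq, P]
    refine convexHull_mono ?_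
      (inv.image_convexHull _ ▸ mem_image_of_mem inv (hp : cubeCoords p ∈ _))
    rintro _ ⟨v, hv, rfl⟩
    simp only [mem_univ_pi, mem_insert_iff, mem_singleton_iff] at hv
    rcases hv 0 with h0 | h0 <;> rcases hv 1 with h1 | h1 <;> rcases hv 2 with h2 | h2 <;>
      simp [inv_apply, h0, h1, h2]

lemma volume_P : volume P = 1024 := by
  rw [P_eq_preimage_cube, Measure.addHaar_preimage_linearMap _ (by simp [det_cubeCoords]),
    volume_pi_pi]
  simp only [det_cubeCoords, Real.volume_Icc, Finset.prod_const, Finset.card_univ,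
    Fintype.card_fin]
  rw [← ENNReal.ofReal_pow (by norm_num), ← ENNReal.ofReal_mul (by positivity)]
  norm_num

lemma l1Ball_zero_eight_subset_P : l1Ball 0 8 ⊆ P := fun p hp => by
  simp only [l1Ball, Fin.sum_univ_three, Pi.zero_apply, sub_zero, mem_ofPred_eq] at hp
  rw [P_eq_preimage_cube, mem_preimage, cubeCoords_apply, mem_univ_pi]
  intro i
  rw [mem_Icc]
  fin_cases i <;> dsimp <;> constructor <;>
    linarith [neg_abs_le (p 0), le_abs_self (p 0), neg_abs_le (p 1), le_abs_self (p 1),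
      neg_abs_le (p 2), le_abs_self (p 2)]

lemma volume_P_sdiff_l1Ball {c : Fin 3 → ℝ} (hc : l1Ball c 6 ⊆ P) :
    volume (P \ l1Ball c 6) = 736 := by
  rw [measure_sdiff hc (measurableSet_l1Ball c 6).nullMeasurableSet
      (by simp [volume_l1Ball_fin_three]),
    volume_P, volume_l1Ball_fin_three _ (by norm_num), ← ENNReal.ofReal_ofNat,
    ← ENNReal.ofReal_sub _ (by norm_num)]
  norm_num

theorem density_ge_of_many_neighbors_general (X : Set (Fin 3 → ℝ))
    (hdisc : DiscreteTopology ↥X)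
    (hcov : ⋃ x ∈ X, x +ᵥ C₃ = univ)
    (x₀ : Fin 3 → ℝ) (h0 : (0 : Fin 3 → ℝ) ∈ x₀ +ᵥ C₃)
    (S : Finset (Fin 3 → ℝ)) (hS : ↑S ⊆ X) (hcard : 28 ≤ S.card)
    (hmeets : ∀ y ∈ S, ((y +ᵥ C₃) ∩ (x₀ +ᵥ C₃)).Nonempty) :
    (1 + 1 / 96 : ℝ≥0∞) ≤
      (∑' x : X, volume (P ∩ ((x : Fin 3 → ℝ) +ᵥ C₃))) / volume P := by
  classical
  have : Countable X := countable_of_Lindelof_of_discrete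
  simp only [vadd_C₃] at h0 hmeets
  have hBP : l1Ball x₀ 6 ⊆ P := (l1Ball_subset_l1Ball (r' := 8) (mem_l1Ball_comm.1 h0)
    (by norm_num)).trans l1Ball_zero_eight_subset_P
  have hSB (y : Fin 3 → ℝ) (hy : y ∈ S) : y +ᵥ C₃ ⊆ l1Ball x₀ 6 :=
    vadd_C₃ y ▸ l1Ball_subset_l1Ball (mem_l1Ball_of_inter_nonempty (hmeets y hy)) (by norm_num)
  have key := measure_sdiff_add_sum_le_tsum_measure_inter volume (measurableSet_l1Ball x₀ 6)
    (A := P) (s := fun x : X => (x : Fin 3 → ℝ) +ᵥ C₃)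
    (by rw [iUnion_coe_set, hcov]; exact subset_univ _) (S.subtype (· ∈ X))
    fun y hy => subset_inter ((hSB y (Finset.mem_subtype.1 hy)).trans hBP)
      (hSB y (Finset.mem_subtype.1 hy))
  simp only [measure_vadd, Finset.sum_const, volume_C₃, volume_P_sdiff_l1Ball hBP,
    Finset.card_subtype, Finset.filter_true_of_mem fun y hy => hS hy, nsmul_eq_mul] at key
  rw [volume_P, ENNReal.le_div_iff_mul_le (by simp) (by simp)]
  calc (1 + 1 / 96 : ℝ≥0∞) * 1024 = 736 + 28 * ENNReal.ofReal (32 / 3) := by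
        rw [← ENNReal.toReal_eq_toReal_iff' (by finiteness) (by finiteness)]
        simp (disch := finiteness) only [ENNReal.toReal_mul, ENNReal.toReal_add]
        norm_num
    _ ≤ 736 + S.card * ENNReal.ofReal (32 / 3) := by gcongr; exact_mod_cast hcard
    _ ≤ _ := key

/-- Case `m ≥ 27`: if `C₃ + X` is a translative covering of ℝ³ by a discrete
set `X`, the translate `C₃ + x₀` (with `x₀ ∈ X`) contains the origin, and at
least 28 translates from `X` meet `C₃ + x₀`, then the density of the covering
relative to `P` is at least `1 + 1/96`. -/
theorem density_ge_of_many_neighbors (X : Set (Fin 3 → ℝ))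
    (hdisc : DiscreteTopology ↥X)
    (hcov : ⋃ x ∈ X, x +ᵥ C₃ = univ)
    (x₀ : Fin 3 → ℝ) (hx₀ : x₀ ∈ X) (h0 : (0 : Fin 3 → ℝ) ∈ x₀ +ᵥ C₃)
    (S : Finset (Fin 3 → ℝ)) (hS : ↑S ⊆ X) (hcard : 28 ≤ S.card)
    (hmeets : ∀ y ∈ S, ((y +ᵥ C₃) ∩ (x₀ +ᵥ C₃)).Nonempty) :
    (1 + 1 / 96 : ℝ≥0∞) ≤
      (∑' x : X, volume (P ∩ ((x : Fin 3 → ℝ) +ᵥ C₃))) / volume P :=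
  density_ge_of_many_neighbors_general X hdisc hcov x₀ h0 S hS hcard hmeets
end

section
/- Let Q and Q' be two axis-parallel squares in the plane at height parameter z₀, arising as cross sections of translated octahedra C₃ + x and C₃ + x' whose third coordinates satisfy z₀ ≤ x₃ and z₀ ≤ x'₃ (so both squares grow as z increases past z₀). If both squares have edge lengths in [√2/27, 53√2/27] and they overlap in the corner configuration with offsets 0 ≤ b ≤ a, then vol((C₃+x) ∩ (C₃+x')) ≥ (√2/3)(2√2 - 53√2/27)³ = 4/3¹⁰. -/
open Set Pointwise MeasureTheory ENNReal

/-- The volume of the closed ℓ¹-ball of radius `1/27` in `ℝ³`, written in the form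
used by `MeasureTheory.volume_sum_rpow_le`. -/
lemma volume_small_l1_ball :
    volume {q : Fin 3 → ℝ | (∑ i, |q i| ^ (1:ℝ)) ^ (1/(1:ℝ)) ≤ 1/27}
      = ENNReal.ofReal (4 / 3 ^ 10) := by
  rw [MeasureTheory.volume_sum_rpow_le (ι := Fin 3) le_rfl (1/27)]
  norm_num [Real.Gamma_two]
  rw [← ENNReal.ofReal_pow (by norm_num), ← ENNReal.ofReal_mul (by norm_num)]
  norm_num [Nat.factorial]

/-- Corner configuration (I), equal signs (`δ = +1` for both): the cross sections of
`C₃ + x` and `C₃ + x'` at height `z₀` are squares of edge lengths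
`l, l' ∈ [√2/27, 53√2/27]`; both expand as `z` increases past `z₀`
(`z₀ ∈ [x₃-2, x₃]` and `z₀ ∈ [x'₃-2, x'₃]`); the square of `C₃ + x'` covers one
vertex of the square of `C₃ + x`, with edge-offset distances `0 ≤ b ≤ a ≤ l' ≤ l`
(`a`, `b` are the distances between the corresponding pairs of parallel edge lines).
Then `vol((C₃+x) ∩ (C₃+x')) ≥ (√2/3)(2√2 - 53√2/27)³ = 4/3¹⁰`. -/
theorem corner_config_overlap (x x' : Fin 3 → ℝ) (z₀ : ℝ)
    (hδ : z₀ ∈ Icc (x 2 - 2) (x 2)) (hδ' : z₀ ∈ Icc (x' 2 - 2) (x' 2))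
    (r r' l l' a b : ℝ)
    (hr : r = 2 - (x 2 - z₀)) (hr' : r' = 2 - (x' 2 - z₀))
    (hl : l = Real.sqrt 2 * r) (hl' : l' = Real.sqrt 2 * r')
    (hlo : Real.sqrt 2 / 27 ≤ l) (hhi : l ≤ 53 * Real.sqrt 2 / 27)
    (hlo' : Real.sqrt 2 / 27 ≤ l') (hhi' : l' ≤ 53 * Real.sqrt 2 / 27)
    (ha : a = (((x 0 + x 1) + r) - ((x' 0 + x' 1) - r')) / Real.sqrt 2)
    (hb : b = (((x 0 - x 1) + r) - ((x' 0 - x' 1) - r')) / Real.sqrt 2)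
    (hb0 : 0 ≤ b) (hba : b ≤ a) (hal' : a ≤ l') (hl'l : l' ≤ l) :
    ENNReal.ofReal (4 / 3 ^ 10) ≤ volume ((x +ᵥ C₃) ∩ (x' +ᵥ C₃)) := by
  have hs : (0:ℝ) < Real.sqrt 2 := by positivity
  have hs2 : Real.sqrt 2 * Real.sqrt 2 = 2 := Real.mul_self_sqrt (by norm_num)
  -- basic bounds on r, r'
  have hr_hi : r ≤ 53 / 27 := by rw [hl] at hhi; nlinarith
  have hr'_lo : 1 / 27 ≤ r' := by rw [hl'] at hlo'; nlinarith
  have hr'r : r' ≤ r := by rw [hl, hl'] at hl'l; nlinarith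
  -- rewrite the offset hypotheses as linear equations
  have haq : Real.sqrt 2 * a = ((x 0 + x 1) + r) - ((x' 0 + x' 1) - r') := by
    rw [ha]; field_simp
  have hbq : Real.sqrt 2 * b = ((x 0 - x 1) + r) - ((x' 0 - x' 1) - r') := by
    rw [hb]; field_simp
  have hsb0 : 0 ≤ Real.sqrt 2 * b := by positivity
  have hsba : Real.sqrt 2 * b ≤ Real.sqrt 2 * a := by nlinarith
  have hsa2 : Real.sqrt 2 * a ≤ 2 * r' := by
    rw [hl'] at hal'; nlinarith
  -- the key bound : ‖x - x'‖₁ ≤ 106/27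
  have e3 : x 2 - x' 2 = r' - r := by rw [hr, hr'] at *; linarith
  have key : |x 0 - x' 0| + |x 1 - x' 1| + |x 2 - x' 2| ≤ 106 / 27 := by
    rcases abs_cases (x 0 - x' 0) with ⟨p0, q0⟩ | ⟨p0, q0⟩ <;>
      rcases abs_cases (x 1 - x' 1) with ⟨p1, q1⟩ | ⟨p1, q1⟩ <;>
      rcases abs_cases (x 2 - x' 2) with ⟨p2, q2⟩ | ⟨p2, q2⟩ <;>
      linarith
  -- the ℓ¹-ball of radius 1/27 around the midpoint lies in the intersection
  set y : Fin 3 → ℝ := fun i => (x i + x' i) / 2 with hy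
  set B : Set (Fin 3 → ℝ) :=
    {q : Fin 3 → ℝ | (∑ i, |q i| ^ (1:ℝ)) ^ (1/(1:ℝ)) ≤ 1/27} with hB
  have hsub : y +ᵥ B ⊆ (x +ᵥ C₃) ∩ (x' +ᵥ C₃) := by
    rintro p ⟨q, hq, rfl⟩
    have hq' : |q 0| + |q 1| + |q 2| ≤ 1 / 27 := by
      have := hq
      simp only [hB, mem_setOf_eq, Real.rpow_one, one_div_one, Fin.sum_univ_three] at this
      linarith
    have habs : ∀ i, |(y +ᵥ q) i - x i| ≤ |q i| + |x i - x' i| / 2 ∧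
        |(y +ᵥ q) i - x' i| ≤ |q i| + |x i - x' i| / 2 := by
      intro i
      have h1 : (y +ᵥ q) i - x i = q i + (x' i - x i) / 2 := by
        simp [hy, Pi.vadd_apply]; ring
      have h2 : (y +ᵥ q) i - x' i = q i + (x i - x' i) / 2 := by
        simp [hy, Pi.vadd_apply]; ring
      constructor
      · rw [h1]
        refine (abs_add_le _ _).trans ?_
        rw [abs_div, abs_sub_comm (x' i) (x i)]
        simp
      · rw [h2]
        refine (abs_add_le _ _).trans ?_
        rw [abs_div]
        simp
    constructor
    · refine ⟨fun i => (y +ᵥ q) i - x i, ?_, by funext i; simp [Pi.vadd_apply]⟩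
      show |(y +ᵥ q) 0 - x 0| + |(y +ᵥ q) 1 - x 1| + |(y +ᵥ q) 2 - x 2| ≤ 2
      linarith [(habs 0).1, (habs 1).1, (habs 2).1]
    · refine ⟨fun i => (y +ᵥ q) i - x' i, ?_, by funext i; simp [Pi.vadd_apply]⟩
      show |(y +ᵥ q) 0 - x' 0| + |(y +ᵥ q) 1 - x' 1| + |(y +ᵥ q) 2 - x' 2| ≤ 2
      linarith [(habs 0).2, (habs 1).2, (habs 2).2]
  calc ENNReal.ofReal (4 / 3 ^ 10) = volume B := volume_small_l1_ball.symm
    _ = volume (y +ᵥ B) := (measure_vadd volume y B).symm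
    _ ≤ volume ((x +ᵥ C₃) ∩ (x' +ᵥ C₃)) := measure_mono hsub
end

section
/- Let C₃ + x and C₃ + x' be two translated octahedra whose square cross sections at some height z₀ both have edge lengths in [√2/27, 53√2/27], both expand as z increases (δ = +1 for both), and are nested (one square contains all four vertices of the other, offset g ≥ 0 on one side). Then vol((C₃+x) ∩ (C₃+x')) ≥ 4/3¹⁰. -/
open Set Pointwise MeasureTheory ENNReal

/-- The square cross section of the translate `C₃ + x` at height `z₀`,
viewed in the `(u,v)`-plane. -/
def crossSection (x : Fin 3 → ℝ) (z₀ : ℝ) : Set (ℝ × ℝ) :=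
  {uv | |uv.1 - x 0| + |uv.2 - x 1| ≤ 2 - |z₀ - x 2|}

/-- Volume of the ℓ¹-ball of radius `r` in `ℝ³`. -/
lemma volume_l1_ball (r : ℝ) :
    volume {q : Fin 3 → ℝ | |q 0| + |q 1| + |q 2| ≤ r} = .ofReal r ^ 3 * .ofReal (4/3) := by
  have h := MeasureTheory.volume_sum_rpow_le (Fin 3) (p := 1) le_rfl r
  simp only [Real.rpow_one, one_div_one, Fintype.card_fin] at h
  rw [show {q : Fin 3 → ℝ | |q 0| + |q 1| + |q 2| ≤ r}
      = {q : Fin 3 → ℝ | ∑ i, |q i| ≤ r} by ext q; simp [Fin.sum_univ_three]]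
  rw [h]
  congr 1
  rw [show ((3:ℕ):ℝ)/1 + 1 = (3:ℕ)+1 by norm_num,
    Real.Gamma_nat_eq_factorial, show (1:ℝ)+1 = (1:ℕ)+1 by norm_num, Real.Gamma_nat_eq_factorial]
  norm_num [Nat.factorial]

/-- Volume of a translated ℓ¹-ball of radius `r` in `ℝ³`. -/
lemma volume_l1_ball_center (c : Fin 3 → ℝ) (r : ℝ) :
    volume {q : Fin 3 → ℝ | |q 0 - c 0| + |q 1 - c 1| + |q 2 - c 2| ≤ r}
      = .ofReal r ^ 3 * .ofReal (4/3) := by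
  have : {q : Fin 3 → ℝ | |q 0 - c 0| + |q 1 - c 1| + |q 2 - c 2| ≤ r}
      = c +ᵥ {q : Fin 3 → ℝ | |q 0| + |q 1| + |q 2| ≤ r} := by
    ext q
    rw [Set.mem_vadd_set_iff_neg_vadd_mem]
    simp only [Set.mem_setOf_eq, vadd_eq_add, Pi.add_apply, Pi.neg_apply, neg_add_eq_sub,
      Pi.sub_apply]
  rw [this, measure_vadd, volume_l1_ball]

/-- Nested configuration (III), equal signs (`δ = +1` for both): the cross
sections of `C₃ + x` and `C₃ + x'` at height `z₀` are squares with edge lengths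
in `[√2/27, 53√2/27]`, both expand as `z` increases past `z₀`
(`z₀ ∈ [x₃-2, x₃]` and `z₀ ∈ [x'₃-2, x'₃]`), and the square of `C₃ + x` is
contained in that of `C₃ + x'` (so all four of its vertices are covered).
Then `vol((C₃+x) ∩ (C₃+x')) ≥ 4/3¹⁰`. -/
theorem nested_config_overlap (x x' : Fin 3 → ℝ) (z₀ : ℝ)
    (hδ : z₀ ∈ Icc (x 2 - 2) (x 2)) (hδ' : z₀ ∈ Icc (x' 2 - 2) (x' 2))
    (hlo : Real.sqrt 2 / 27 ≤ Real.sqrt 2 * (2 - |z₀ - x 2|))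
    (hhi : Real.sqrt 2 * (2 - |z₀ - x 2|) ≤ 53 * Real.sqrt 2 / 27)
    (hlo' : Real.sqrt 2 / 27 ≤ Real.sqrt 2 * (2 - |z₀ - x' 2|))
    (hhi' : Real.sqrt 2 * (2 - |z₀ - x' 2|) ≤ 53 * Real.sqrt 2 / 27)
    (hnested : crossSection x z₀ ⊆ crossSection x' z₀) :
    ENNReal.ofReal (4 / 3 ^ 10) ≤ volume ((x +ᵥ C₃) ∩ (x' +ᵥ C₃)) := by
  have hs2 : (0:ℝ) < Real.sqrt 2 := by positivity
  set r : ℝ := 2 - |z₀ - x 2| with hr_def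
  set r' : ℝ := 2 - |z₀ - x' 2| with hr'_def
  have hr : 1/27 ≤ r := by nlinarith
  have hr' : 1/27 ≤ r' := by nlinarith
  have hrpos : (0:ℝ) < r := by linarith
  -- nestedness of centers: |x₀-x'₀| + |x₁-x'₁| + r ≤ r'
  have hd : |x 0 - x' 0| + |x 1 - x' 1| + r ≤ r' := by
    rcases le_total (x' 0) (x 0) with h | h
    · have hv : ((x 0 + r, x 1) : ℝ × ℝ) ∈ crossSection x z₀ := by
        simp only [crossSection, Set.mem_setOf_eq]
        rw [show x 0 + r - x 0 = r by ring]
        rw [abs_of_pos hrpos, sub_self, abs_zero]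
        linarith
      have := hnested hv
      simp only [crossSection, Set.mem_setOf_eq] at this
      rw [show x 0 + r - x' 0 = (x 0 - x' 0) + r by ring,
        abs_of_nonneg (by linarith : (0:ℝ) ≤ (x 0 - x' 0) + r)] at this
      rw [abs_of_nonneg (by linarith : (0:ℝ) ≤ x 0 - x' 0)]
      linarith
    · have hv : ((x 0 - r, x 1) : ℝ × ℝ) ∈ crossSection x z₀ := by
        simp only [crossSection, Set.mem_setOf_eq]
        rw [show x 0 - r - x 0 = -r by ring, abs_neg, abs_of_pos hrpos, sub_self, abs_zero]
        linarith
      have := hnested hv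
      simp only [crossSection, Set.mem_setOf_eq] at this
      rw [show x 0 - r - x' 0 = -((x' 0 - x 0) + r) by ring, abs_neg,
        abs_of_nonneg (by linarith : (0:ℝ) ≤ (x' 0 - x 0) + r)] at this
      rw [abs_sub_comm, abs_of_nonneg (by linarith : (0:ℝ) ≤ x' 0 - x 0)]
      linarith
  -- the ℓ¹ ball K of radius r centered at (x₀, x₁, z₀) is in the intersection
  set c : Fin 3 → ℝ := ![x 0, x 1, z₀] with hc
  set K : Set (Fin 3 → ℝ) := {q | |q 0 - c 0| + |q 1 - c 1| + |q 2 - c 2| ≤ r} with hK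
  have hKsub : K ⊆ (x +ᵥ C₃) ∩ (x' +ᵥ C₃) := by
    intro q hq
    simp only [hK, hc, Set.mem_setOf_eq, Matrix.cons_val_zero, Matrix.cons_val_one,
      Matrix.head_cons, Matrix.cons_val_two, Matrix.tail_cons] at hq
    have t2 : |q 2 - x 2| ≤ |q 2 - z₀| + |z₀ - x 2| := abs_sub_le _ _ _
    have t2' : |q 2 - x' 2| ≤ |q 2 - z₀| + |z₀ - x' 2| := abs_sub_le _ _ _
    have t0 : |q 0 - x' 0| ≤ |q 0 - x 0| + |x 0 - x' 0| := abs_sub_le _ _ _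
    have t1 : |q 1 - x' 1| ≤ |q 1 - x 1| + |x 1 - x' 1| := abs_sub_le _ _ _
    constructor
    · rw [Set.mem_vadd_set_iff_neg_vadd_mem]
      simp only [C₃, Set.mem_setOf_eq, vadd_eq_add, Pi.add_apply, Pi.neg_apply,
        neg_add_eq_sub, Pi.sub_apply]
      linarith
    · rw [Set.mem_vadd_set_iff_neg_vadd_mem]
      simp only [C₃, Set.mem_setOf_eq, vadd_eq_add, Pi.add_apply, Pi.neg_apply,
        neg_add_eq_sub, Pi.sub_apply]
      linarith
  calc ENNReal.ofReal (4 / 3 ^ 10) ≤ volume K := by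
        rw [hK, volume_l1_ball_center]
        have h1 : ENNReal.ofReal (4 / 3 ^ 10)
            = ENNReal.ofReal ((1/27) ^ 3 * (4/3)) := by norm_num
        rw [h1, ENNReal.ofReal_mul (by positivity), ENNReal.ofReal_pow (by norm_num)]
        gcongr
    _ ≤ volume ((x +ᵥ C₃) ∩ (x' +ᵥ C₃)) := measure_mono hKsub
end

section
/- If the boundary of a translate C₃ + x₀ of the octahedron is covered by finitely many translates C₃ + x₁, …, C₃ + x_m, each intersecting C₃ + x₀, with m ≤ 26, then there exist indices i < j in {1,…,m+1} (with x_{m+1} = x₀) such that vol((C₃ + xᵢ) ∩ (C₃ + x_j)) ≥ 4/3¹⁰. -/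
open Set Pointwise MeasureTheory ENNReal

lemma mem_vadd_C₃ {v p : Fin 3 → ℝ} :
    p ∈ v +ᵥ C₃ ↔ |p 0 - v 0| + |p 1 - v 1| + |p 2 - v 2| ≤ 2 := by
  rw [Set.mem_vadd_set_iff_neg_vadd_mem]
  simp [C₃, Set.mem_setOf_eq, neg_add_eq_sub]

lemma vol_lower (y z : Fin 3 → ℝ)
    (h : |y 0 - z 0| + |y 1 - z 1| + |y 2 - z 2| ≤ 31/8) :
    ENNReal.ofReal (4 / 3 ^ 10) ≤ volume ((y +ᵥ C₃) ∩ (z +ᵥ C₃)) := by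
  set mid : Fin 3 → ℝ := fun k => (y k + z k) / 2 with hmid
  have hsub : (Set.univ.pi fun k => Icc (mid k - 1/48) (mid k + 1/48)) ⊆
      (y +ᵥ C₃) ∩ (z +ᵥ C₃) := by
    intro p hp
    simp only [Set.mem_pi, Set.mem_univ, forall_true_left, Set.mem_Icc] at hp
    have hb : ∀ k, |p k - mid k| ≤ 1/48 := by
      intro k; rw [abs_le]; constructor <;> [linarith [(hp k).1]; linarith [(hp k).2]]
    have hy : ∀ k, |p k - y k| ≤ 1/48 + |y k - z k| / 2 := by
      intro k
      have t := abs_sub_le (p k) (mid k) (y k)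
      have : |mid k - y k| = |y k - z k| / 2 := by
        rw [hmid]; rw [show (y k + z k)/2 - y k = -((y k - z k)/2) by ring, abs_neg, abs_div]
        simp
      calc |p k - y k| ≤ |p k - mid k| + |mid k - y k| := t
        _ ≤ 1/48 + |y k - z k| / 2 := by rw [this]; linarith [hb k]
    have hz : ∀ k, |p k - z k| ≤ 1/48 + |y k - z k| / 2 := by
      intro k
      have t := abs_sub_le (p k) (mid k) (z k)
      have : |mid k - z k| = |y k - z k| / 2 := by
        rw [hmid]; rw [show (y k + z k)/2 - z k = (y k - z k)/2 by ring, abs_div]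
        simp
      calc |p k - z k| ≤ |p k - mid k| + |mid k - z k| := t
        _ ≤ 1/48 + |y k - z k| / 2 := by rw [this]; linarith [hb k]
    constructor
    · rw [mem_vadd_C₃]; linarith [hy 0, hy 1, hy 2]
    · rw [mem_vadd_C₃]; linarith [hz 0, hz 1, hz 2]
  have hvol : volume (Set.univ.pi fun k : Fin 3 => Icc (mid k - 1/48) (mid k + 1/48)) =
      ENNReal.ofReal (1/24) ^ 3 := by
    rw [volume_pi_pi]
    have : ∀ k : Fin 3, volume (Icc (mid k - 1/48) (mid k + 1/48)) = ENNReal.ofReal (1/24) := by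
      intro k; rw [Real.volume_Icc]; norm_num
    simp only [this]
    rw [Finset.prod_const]
    norm_num
  calc ENNReal.ofReal (4 / 3 ^ 10) ≤ ENNReal.ofReal (1/24) ^ 3 := by
        rw [← ENNReal.ofReal_pow (by norm_num : (0:ℝ) ≤ 1/24)]
        apply ENNReal.ofReal_le_ofReal; norm_num
    _ = volume (Set.univ.pi fun k : Fin 3 => Icc (mid k - 1/48) (mid k + 1/48)) := hvol.symm
    _ ≤ volume ((y +ᵥ C₃) ∩ (z +ᵥ C₃)) := measure_mono hsub

lemma sphere_mem_frontier (v w : Fin 3 → ℝ) (hw : |w 0| + |w 1| + |w 2| = 2) :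
    v + w ∈ frontier (v +ᵥ C₃) := by
  rw [frontier_eq_closure_inter_closure]
  constructor
  · apply subset_closure
    rw [mem_vadd_C₃]
    simp only [Pi.add_apply]
    have : ∀ k : Fin 3, v k + w k - v k = w k := by intro k; ring
    rw [this 0, this 1, this 2]; linarith
  · rw [Metric.mem_closure_iff]
    intro ε hε
    refine ⟨v + w + (ε/5) • w, ?_, ?_⟩
    · intro hmem
      rw [mem_vadd_C₃] at hmem
      simp only [Pi.add_apply, Pi.smul_apply, smul_eq_mul] at hmem
      have he : ∀ k : Fin 3, v k + w k + (ε/5) * w k - v k = (1 + ε/5) * w k := by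
        intro k; ring
      rw [he 0, he 1, he 2] at hmem
      have h1 : (0:ℝ) < 1 + ε/5 := by linarith
      rw [abs_mul, abs_mul, abs_mul, abs_of_pos h1] at hmem
      nlinarith [abs_nonneg (w 0), abs_nonneg (w 1), abs_nonneg (w 2)]
    · have hd : dist (v + w) (v + w + (ε/5) • w) ≤ 2 * (ε/5) := by
        rw [dist_pi_le_iff (by positivity)]
        intro k
        simp only [Pi.add_apply, Pi.smul_apply, smul_eq_mul, Real.dist_eq]
        have : v k + w k - (v k + w k + ε/5 * w k) = -(ε/5 * w k) := by ring
        rw [this, abs_neg, abs_mul, abs_of_pos (by linarith : (0:ℝ) < ε/5)]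
        have hwk : |w k| ≤ 2 := by
          fin_cases k <;> simp <;>
            [linarith [abs_nonneg (w 1), abs_nonneg (w 2)];
             linarith [abs_nonneg (w 0), abs_nonneg (w 2)];
             linarith [abs_nonneg (w 0), abs_nonneg (w 1)]]
        nlinarith
      linarith



-- |a - b| ≤ |a| + |b|
lemma habs (a b : ℝ) : |a - b| ≤ |a| + |b| := by
  rcases abs_cases a with ⟨h1,_⟩|⟨h1,_⟩ <;> rcases abs_cases b with ⟨h2,_⟩|⟨h2,_⟩ <;>
    rcases abs_cases (a-b) with ⟨h3,_⟩|⟨h3,_⟩ <;> linarith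

lemma hub {a b L : ℝ} (ha : L ≤ a) (hb : L ≤ b) : |a - b| ≤ a + b - 2*L := by
  rcases abs_cases (a-b) with ⟨h,_⟩|⟨h,_⟩ <;> linarith

lemma hub' {a b L : ℝ} (ha : a ≤ -L) (hb : b ≤ -L) : |a - b| ≤ -a + -b - 2*L := by
  rcases abs_cases (a-b) with ⟨h,_⟩|⟨h,_⟩ <;> linarith

/-- all-light half-core contradiction -/
lemma coreHalf (pS aS bS pT aT bT pX aX bX : ℝ)
    (hpS : 139/80 ≤ pS) (haS : 29/32 ≤ aS) (hbS : 3/80 ≤ bS)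
    (hpT : 139/80 ≤ pT) (haT : 3/80 ≤ aT) (hbT : bT ≤ -(3/80))
    (hpX : 99/80 ≤ pX) (haX : 7/16 ≤ aX) (hbX : bX ≤ -(11/80))
    (hnS : pS + |aS| + |bS| ≤ 4) (hnT : pT + |aT| + |bT| ≤ 4)
    (hnX : pX + |aX| + |bX| ≤ 4)
    (hrT : 31/8 < pT + |aT| + |bT|) (hrX : 31/8 < pX + |aX| + |bX|)
    (hlT : pT ≤ 33/16) (hlX : pX ≤ 33/16)
    (sepTS : (31/8 < |pT - pS| + |aT - aS| + |bT - bS|) ∨ (pT = pS ∧ aT = aS ∧ bT = bS))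
    (sepXS : (31/8 < |pX - pS| + |aX - aS| + |bX - bS|) ∨ (pX = pS ∧ aX = aS ∧ bX = bS))
    (sepXT : (31/8 < |pX - pT| + |aX - aT| + |bX - bT|) ∨ (pX = pT ∧ aX = aT ∧ bX = bT)) :
    False := by
  have haS' : |aS| = aS := abs_of_nonneg (by linarith)
  have hbS' : |bS| = bS := abs_of_nonneg (by linarith)
  have haT' : |aT| = aT := abs_of_nonneg (by linarith)
  have hbT' : |bT| = -bT := abs_of_nonpos (by linarith)
  have haX' : |aX| = aX := abs_of_nonneg (by linarith)
  have hbX' : |bX| = -bX := abs_of_nonpos (by linarith)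
  rcases le_or_gt (29/32) aT with hTa | hTa
  · -- T has big a: clash with S
    rcases sepTS with hsep | ⟨_, _, heqb⟩
    · have h1 : |pT - pS| ≤ pT + pS - 2*(139/80) := hub hpT hpS
      have h2 : |aT - aS| ≤ aT + aS - 2*(29/32) := hub hTa haS
      have h3 : |bT - bS| ≤ |bT| + |bS| := habs _ _
      linarith
    · linarith
  · -- T has big (-b)
    have hTb : 29/32 ≤ -bT := by linarith
    rcases le_or_gt (29/32) aX with hXa | hXa
    · -- X has big a : clash with S
      rcases sepXS with hsep | ⟨_, _, heqb⟩
      · have h1 : |pX - pS| ≤ pX + pS - 2*(99/80) := hub hpX (by linarith)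
        have h2 : |aX - aS| ≤ aX + aS - 2*(29/32) := hub hXa haS
        have h3 : |bX - bS| ≤ |bX| + |bS| := habs _ _
        linarith
      · linarith
    · -- X has big (-b): X = T forced
      have hXb : 29/32 ≤ -bX := by linarith
      rcases sepXT with hsep | ⟨heqp, heqa, heqb⟩
      · have h1 : |pX - pT| ≤ pX + pT - 2*(99/80) := hub hpX (by linarith)
        have h2 : |bX - bT| ≤ -bX + -bT - 2*(29/32) := hub' (by linarith) (by linarith)
        have h3 : |aX - aT| ≤ |aX| + |aT| := habs _ _
        linarith
      · -- now aT = aX ≥ 7/16 : final clash T vs S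
        rcases sepTS with hsep | ⟨_, _, heqb'⟩
        · have h1 : |pT - pS| ≤ pT + pS - 2*(139/80) := hub hpT hpS
          have h2 : |aT - aS| ≤ aT + aS - 2*(7/16) := hub (by linarith) (by linarith)
          have h3 : |bT - bS| ≤ |bT| + |bS| := habs _ _
          linarith
        · linarith

lemma sepswap (p q a b c d : ℝ)
    (h : (31/8 < |p - q| + |a - b| + |c - d|) ∨ (p = q ∧ a = b ∧ c = d)) :
    (31/8 < |p - q| + |c - d| + |a - b|) ∨ (p = q ∧ c = d ∧ a = b) := by
  rcases h with h | ⟨h1, h2, h3⟩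
  · exact Or.inl (by linarith)
  · exact Or.inr ⟨h1, h3, h2⟩

/-- full all-light core contradiction -/
lemma core5 (pS aS bS pT aT bT pU aU bU pX aX bX pY aY bY : ℝ)
    (hpS : 139/80 ≤ pS) (haS : 3/80 ≤ aS) (hbS : 3/80 ≤ bS)
    (hpT : 139/80 ≤ pT) (haT : 3/80 ≤ aT) (hbT : bT ≤ -(3/80))
    (hpU : 139/80 ≤ pU) (haU : aU ≤ -(3/80)) (hbU : 3/80 ≤ bU)
    (hpX : 99/80 ≤ pX) (haX : 7/16 ≤ aX) (hbX : bX ≤ -(11/80))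
    (hpY : 99/80 ≤ pY) (haY : aY ≤ -(11/80)) (hbY : 7/16 ≤ bY)
    (hnS : pS + |aS| + |bS| ≤ 4) (hnT : pT + |aT| + |bT| ≤ 4)
    (hnU : pU + |aU| + |bU| ≤ 4)
    (hnX : pX + |aX| + |bX| ≤ 4) (hnY : pY + |aY| + |bY| ≤ 4)
    (hrS : 31/8 < pS + |aS| + |bS|)
    (hrT : 31/8 < pT + |aT| + |bT|) (hrU : 31/8 < pU + |aU| + |bU|)
    (hrX : 31/8 < pX + |aX| + |bX|) (hrY : 31/8 < pY + |aY| + |bY|)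
    (hlS : pS ≤ 33/16) (hlT : pT ≤ 33/16) (hlU : pU ≤ 33/16)
    (hlX : pX ≤ 33/16) (hlY : pY ≤ 33/16)
    (sepTS : (31/8 < |pT - pS| + |aT - aS| + |bT - bS|) ∨ (pT = pS ∧ aT = aS ∧ bT = bS))
    (sepXS : (31/8 < |pX - pS| + |aX - aS| + |bX - bS|) ∨ (pX = pS ∧ aX = aS ∧ bX = bS))
    (sepXT : (31/8 < |pX - pT| + |aX - aT| + |bX - bT|) ∨ (pX = pT ∧ aX = aT ∧ bX = bT))
    (sepUS : (31/8 < |pU - pS| + |aU - aS| + |bU - bS|) ∨ (pU = pS ∧ aU = aS ∧ bU = bS))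
    (sepYS : (31/8 < |pY - pS| + |aY - aS| + |bY - bS|) ∨ (pY = pS ∧ aY = aS ∧ bY = bS))
    (sepYU : (31/8 < |pY - pU| + |aY - aU| + |bY - bU|) ∨ (pY = pU ∧ aY = aU ∧ bY = bU)) :
    False := by
  have haS' : |aS| = aS := abs_of_nonneg (by linarith)
  have hbS' : |bS| = bS := abs_of_nonneg (by linarith)
  rcases le_or_gt (29/32) aS with hSa | hSa
  · exact coreHalf pS aS bS pT aT bT pX aX bX hpS hSa hbS hpT haT hbT hpX haX hbX
      hnS hnT hnX hrT hrX hlT hlX sepTS sepXS sepXT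
  · have hSb : 29/32 ≤ bS := by linarith
    have swap : ∀ a b c : ℝ, a + |c| + |b| ≤ 4 → a + |b| + |c| ≤ 4 := by intro a b c h; linarith
    have swap' : ∀ a b c : ℝ, 31/8 < a + |c| + |b| → 31/8 < a + |b| + |c| := by
      intro a b c h; linarith
    exact coreHalf pS bS aS pU bU aU pY bY aY hpS hSb haS hpU hbU haU hpY hbY haY
      (swap _ _ _ hnS) (swap _ _ _ hnU) (swap _ _ _ hnY) (swap' _ _ _ hrU) (swap' _ _ _ hrY)
      hlU hlY
      (sepswap _ _ _ _ _ _ sepUS) (sepswap _ _ _ _ _ _ sepYS) (sepswap _ _ _ _ _ _ sepYU)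



lemma part_lb {wk ck : ℝ} (h1 : wk + |wk - ck| - |ck| < 1/8) (h2 : 1/16 ≤ wk) :
    wk - 1/16 ≤ ck := by
  rcases abs_cases (wk - ck) with ⟨e1,_⟩|⟨e1,_⟩ <;> rcases abs_cases ck with ⟨e2,_⟩|⟨e2,_⟩ <;>
    linarith

lemma part_lb_signed {τ ε ck : ℝ} (hε : ε = 1 ∨ ε = -1)
    (h1 : τ + |ε*τ - ck| - |ck| < 1/8) (h2 : 1/16 ≤ τ) : τ - 1/16 ≤ ε * ck := by
  rcases hε with h | h <;> subst h
  · rw [one_mul] at h1 ⊢; exact part_lb h1 h2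
  · have e1 : |(-1)*τ - ck| = |τ - (-1)*ck| := by
      rw [show (-1)*τ - ck = -(τ - (-1)*ck) by ring, abs_neg]
    have e2 : |ck| = |(-1)*ck| := by rw [show (-1)*ck = -ck by ring, abs_neg]
    rw [e1, e2] at h1
    exact part_lb h1 h2

lemma coverer_facts {h τ₁ τ₂ ε₁ ε₂ c0 c1 c2 : ℝ}
    (hε₁ : ε₁ = 1 ∨ ε₁ = -1) (hε₂ : ε₂ = 1 ∨ ε₂ = -1)
    (hsum : h + τ₁ + τ₂ = 2) (hh : 1/16 ≤ h) (hτ₁ : 1/16 ≤ τ₁) (hτ₂ : 1/16 ≤ τ₂)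
    (hcov : |h - c0| + |ε₁*τ₁ - c1| + |ε₂*τ₂ - c2| ≤ 2)
    (hnrm : 31/8 < |c0| + |c1| + |c2|) :
    (h - 1/16 ≤ c0) ∧ (τ₁ - 1/16 ≤ ε₁ * c1) ∧ (τ₂ - 1/16 ≤ ε₂ * c2) := by
  have a1 : |ε₁*τ₁| = τ₁ := by
    rcases hε₁ with h' | h' <;> subst h'
    · rw [one_mul, abs_of_nonneg (by linarith)]
    · rw [show (-1)*τ₁ = -τ₁ by ring, abs_neg, abs_of_nonneg (by linarith)]
  have a2 : |ε₂*τ₂| = τ₂ := by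
    rcases hε₂ with h' | h' <;> subst h'
    · rw [one_mul, abs_of_nonneg (by linarith)]
    · rw [show (-1)*τ₂ = -τ₂ by ring, abs_neg, abs_of_nonneg (by linarith)]
  have n0 : 0 ≤ h + |h - c0| - |c0| := by
    have := abs_sub_abs_le_abs_sub c0 h
    rw [abs_sub_comm c0 h] at this
    have hh' : |h| = h := abs_of_nonneg (by linarith)
    linarith
  have n1 : 0 ≤ τ₁ + |ε₁*τ₁ - c1| - |c1| := by
    have := abs_sub_abs_le_abs_sub c1 (ε₁*τ₁)
    rw [abs_sub_comm c1 (ε₁*τ₁), a1] at this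
    linarith
  have n2 : 0 ≤ τ₂ + |ε₂*τ₂ - c2| - |c2| := by
    have := abs_sub_abs_le_abs_sub c2 (ε₂*τ₂)
    rw [abs_sub_comm c2 (ε₂*τ₂), a2] at this
    linarith
  have key : (h + |h - c0| - |c0|) + (τ₁ + |ε₁*τ₁ - c1| - |c1|) + (τ₂ + |ε₂*τ₂ - c2| - |c2|)
      < 1/8 := by linarith
  exact ⟨part_lb (by linarith) hh, part_lb_signed hε₁ (by linarith) hτ₁,
    part_lb_signed hε₂ (by linarith) hτ₂⟩


lemma neg_sign {e : ℝ} (he : e = 1 ∨ e = -1) : (-e) = 1 ∨ (-e) = -1 := by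
  rcases he with h | h
  · right; rw [h]
  · left; rw [h]; norm_num

lemma abs_twist {e x y : ℝ} (he : e = 1 ∨ e = -1) : |e*x - e*y| = |x - y| := by
  rcases he with h | h <;> subst h
  · simp
  · rw [show (-1)*x - (-1)*y = -(x - y) by ring, abs_neg]

lemma abs_twist' {e x : ℝ} (he : e = 1 ∨ e = -1) : |e*x| = |x| := by
  rcases he with h | h <;> subst h
  · simp
  · rw [show (-1)*x = -x by ring, abs_neg]

lemma normw {e t : ℝ} (he : e = 1 ∨ e = -1) (ht : 0 ≤ t) : |e*t| = t := by
  rw [abs_twist' he, abs_of_nonneg ht]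

set_option maxHeartbeats 4000000 in
/-- If the boundary of the translate `C₃ + x_{m+1}` is covered by translates
`C₃ + x₁, …, C₃ + x_m` with `m ≤ 26`, each meeting `C₃ + x_{m+1}`, then some
two of the `m+1` translates overlap in volume at least `4/3¹⁰`. -/
theorem exists_large_overlap (m : ℕ) (hm : m ≤ 26) (x : Fin (m + 1) → Fin 3 → ℝ)
    (hbd : frontier (x (Fin.last m) +ᵥ C₃) ⊆
      ⋃ i : Fin m, (x i.castSucc +ᵥ C₃))
    (hmeet : ∀ i : Fin m,
      ((x i.castSucc +ᵥ C₃) ∩ (x (Fin.last m) +ᵥ C₃)).Nonempty) :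
    ∃ i j : Fin (m + 1), i < j ∧
      ENNReal.ofReal (4 / 3 ^ 10) ≤ volume ((x i +ᵥ C₃) ∩ (x j +ᵥ C₃)) := by
  by_contra hcon
  push_neg at hcon
  set c : Fin m → Fin 3 → ℝ := fun i k => x i.castSucc k - x (Fin.last m) k with hc
  have nrm4 : ∀ i, |c i 0| + |c i 1| + |c i 2| ≤ 4 := by
    intro i
    obtain ⟨t, ht1, ht2⟩ := hmeet i
    rw [mem_vadd_C₃] at ht1 ht2
    have e : ∀ k : Fin 3, |c i k| ≤ |t k - x i.castSucc k| + |t k - x (Fin.last m) k| := by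
      intro k
      calc |c i k| = |x i.castSucc k - x (Fin.last m) k| := rfl
        _ ≤ |x i.castSucc k - t k| + |t k - x (Fin.last m) k| := abs_sub_le _ _ _
        _ = |t k - x i.castSucc k| + |t k - x (Fin.last m) k| := by rw [abs_sub_comm]
    linarith [e 0, e 1, e 2]
  have sep0 : ∀ i, 31/8 < |c i 0| + |c i 1| + |c i 2| := by
    intro i
    by_contra hle
    push_neg at hle
    have := vol_lower (x i.castSucc) (x (Fin.last m)) (by
      have e : ∀ k : Fin 3, x i.castSucc k - x (Fin.last m) k = c i k := fun k => rfl
      rw [e 0, e 1, e 2]; exact hle)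
    exact absurd this (not_le.2 (hcon i.castSucc (Fin.last m) (Fin.castSucc_lt_last i)))
  have sep : ∀ i j : Fin m, i ≠ j →
      31/8 < |c i 0 - c j 0| + |c i 1 - c j 1| + |c i 2 - c j 2| := by
    intro i j hij
    by_contra hle
    push_neg at hle
    have e : ∀ k : Fin 3, x i.castSucc k - x j.castSucc k = c i k - c j k := by
      intro k
      show _ = (x i.castSucc k - x (Fin.last m) k) - (x j.castSucc k - x (Fin.last m) k)
      ring
    rcases lt_or_gt_of_ne hij with h | h
    · have := vol_lower (x i.castSucc) (x j.castSucc) (by rw [e 0, e 1, e 2]; exact hle)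
      exact absurd this (not_le.2 (hcon i.castSucc j.castSucc
        (Fin.castSucc_lt_castSucc_iff.2 h)))
    · have := vol_lower (x j.castSucc) (x i.castSucc) (by
        have e' : ∀ k : Fin 3, x j.castSucc k - x i.castSucc k = -(c i k - c j k) := by
          intro k; rw [← e k]; ring
        rw [e' 0, e' 1, e' 2, abs_neg, abs_neg, abs_neg]; exact hle)
      exact absurd this (not_le.2 (hcon j.castSucc i.castSucc
        (Fin.castSucc_lt_castSucc_iff.2 h)))
  have cover : ∀ w0 w1 w2 : ℝ, |w0| + |w1| + |w2| = 2 →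
      ∃ i : Fin m, |w0 - c i 0| + |w1 - c i 1| + |w2 - c i 2| ≤ 2 := by
    intro w0 w1 w2 hw
    set w : Fin 3 → ℝ := fun k => if k = 0 then w0 else if k = 1 then w1 else w2 with hwdef
    have hw0 : w 0 = w0 := rfl
    have hw1 : w 1 = w1 := rfl
    have hw2 : w 2 = w2 := rfl
    have hmem := sphere_mem_frontier (x (Fin.last m)) w (by rw [hw0, hw1, hw2]; exact hw)
    obtain ⟨i, hi⟩ := Set.mem_iUnion.1 (hbd hmem)
    rw [mem_vadd_C₃] at hi
    refine ⟨i, ?_⟩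
    have e : ∀ k : Fin 3, (x (Fin.last m) + w) k - x i.castSucc k = w k - c i k := by
      intro k
      show x (Fin.last m) k + w k - x i.castSucc k = w k - (x i.castSucc k - x (Fin.last m) k)
      ring
    rw [e 0, e 1, e 2, hw0, hw1, hw2] at hi
    exact hi
  clear hc
  clear_value c
  have heavyEq : ∀ i j : Fin m, 33/16 < c i 0 → 33/16 < c j 0 → i = j := by
    intro i j hi hj
    by_contra hne
    have h0 : |c i 0 - c j 0| ≤ c i 0 + c j 0 - 2*(33/16) := hub (le_of_lt hi) (le_of_lt hj)
    have h1 : |c i 1 - c j 1| ≤ |c i 1| + |c j 1| := habs _ _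
    have h2 : |c i 2 - c j 2| ≤ |c i 2| + |c j 2| := habs _ _
    have e1 : |c i 0| = c i 0 := abs_of_nonneg (by linarith)
    have e2 : |c j 0| = c j 0 := abs_of_nonneg (by linarith)
    have hs := sep i j hne
    have n1 := nrm4 i
    have n2 := nrm4 j
    linarith
  have exH : ∀ eu ev : ℝ, (eu = 1 ∨ eu = -1) → (ev = 1 ∨ ev = -1) →
      ∃ i : Fin m, 33/16 < c i 0 ∧ c i 1 ≠ 0 ∧ c i 2 ≠ 0 ∧
        ¬(0 < eu * c i 1 ∧ 0 < ev * c i 2) := by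
    intro eu ev heu hev
    have heu' := neg_sign heu
    have hev' := neg_sign hev
    obtain ⟨iS, hS⟩ := cover (9/5) ((-eu)*(1/10)) ((-ev)*(1/10)) (by
      rw [normw heu' (by norm_num), normw hev' (by norm_num), abs_of_nonneg (by norm_num : (0:ℝ) ≤ 9/5)]; norm_num)
    obtain ⟨iT, hT⟩ := cover (9/5) ((-eu)*(1/10)) (ev*(1/10)) (by
      rw [normw heu' (by norm_num), normw hev (by norm_num), abs_of_nonneg (by norm_num : (0:ℝ) ≤ 9/5)]; norm_num)
    obtain ⟨iU, hU⟩ := cover (9/5) (eu*(1/10)) ((-ev)*(1/10)) (by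
      rw [normw heu (by norm_num), normw hev' (by norm_num), abs_of_nonneg (by norm_num : (0:ℝ) ≤ 9/5)]; norm_num)
    obtain ⟨iX, hX⟩ := cover (13/10) ((-eu)*(1/2)) (ev*(1/5)) (by
      rw [normw heu' (by norm_num), normw hev (by norm_num), abs_of_nonneg (by norm_num : (0:ℝ) ≤ 13/10)]; norm_num)
    obtain ⟨iY, hY⟩ := cover (13/10) (eu*(1/5)) ((-ev)*(1/2)) (by
      rw [normw heu (by norm_num), normw hev' (by norm_num), abs_of_nonneg (by norm_num : (0:ℝ) ≤ 13/10)]; norm_num)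
    obtain ⟨fS0, fS1, fS2⟩ := coverer_facts (hcov := hS) (hnrm := sep0 iS) heu' hev'
      (by norm_num) (by norm_num) (by norm_num) (by norm_num)
    obtain ⟨fT0, fT1, fT2⟩ := coverer_facts (hcov := hT) (hnrm := sep0 iT) heu' hev
      (by norm_num) (by norm_num) (by norm_num) (by norm_num)
    obtain ⟨fU0, fU1, fU2⟩ := coverer_facts (hcov := hU) (hnrm := sep0 iU) heu hev'
      (by norm_num) (by norm_num) (by norm_num) (by norm_num)
    obtain ⟨fX0, fX1, fX2⟩ := coverer_facts (hcov := hX) (hnrm := sep0 iX) heu' hev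
      (by norm_num) (by norm_num) (by norm_num) (by norm_num)
    obtain ⟨fY0, fY1, fY2⟩ := coverer_facts (hcov := hY) (hnrm := sep0 iY) heu hev'
      (by norm_num) (by norm_num) (by norm_num) (by norm_num)
    have mk : ∀ (i : Fin m) (s t : ℝ), (s = 1 ∨ s = -1) → (t = 1 ∨ t = -1) →
        33/16 < c i 0 → 3/80 ≤ s * c i 1 → 3/80 ≤ t * c i 2 →
        ¬(s = eu ∧ t = ev) →
        ∃ i : Fin m, 33/16 < c i 0 ∧ c i 1 ≠ 0 ∧ c i 2 ≠ 0 ∧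
          ¬(0 < eu * c i 1 ∧ 0 < ev * c i 2) := by
      intro i s t hs ht hheavy h1 h2 hne
      refine ⟨i, hheavy, ?_, ?_, ?_⟩
      · intro h0; rw [h0, mul_zero] at h1; linarith
      · intro h0; rw [h0, mul_zero] at h2; linarith
      · rintro ⟨hp1, hp2⟩
        apply hne
        constructor
        · rcases hs with h|h <;> rcases heu with h'|h' <;> subst h <;> subst h'
          · rfl
          · exfalso; rw [one_mul] at h1; rw [neg_one_mul] at hp1; linarith
          · exfalso; rw [neg_one_mul] at h1; rw [one_mul] at hp1; linarith
          · rfl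
        · rcases ht with h|h <;> rcases hev with h'|h' <;> subst h <;> subst h'
          · rfl
          · exfalso; rw [one_mul] at h2; rw [neg_one_mul] at hp2; linarith
          · exfalso; rw [neg_one_mul] at h2; rw [one_mul] at hp2; linarith
          · rfl
    rcases lt_or_ge (33/16) (c iS 0) with hHS | hlS
    · refine mk iS (-eu) (-ev) heu' hev' hHS (by linarith) (by linarith) ?_
      rintro ⟨h1, h2⟩
      rcases heu with h|h <;> rw [h] at h1 <;> norm_num at h1
    rcases lt_or_ge (33/16) (c iT 0) with hHT | hlT
    · refine mk iT (-eu) ev heu' hev hHT (by linarith) (by linarith) ?_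
      rintro ⟨h1, h2⟩
      rcases heu with h|h <;> rw [h] at h1 <;> norm_num at h1
    rcases lt_or_ge (33/16) (c iU 0) with hHU | hlU
    · refine mk iU eu (-ev) heu hev' hHU (by linarith) (by linarith) ?_
      rintro ⟨h1, h2⟩
      rcases hev with h|h <;> rw [h] at h2 <;> norm_num at h2
    rcases lt_or_ge (33/16) (c iX 0) with hHX | hlX
    · refine mk iX (-eu) ev heu' hev hHX (by linarith) (by linarith) ?_
      rintro ⟨h1, h2⟩
      rcases heu with h|h <;> rw [h] at h1 <;> norm_num at h1
    rcases lt_or_ge (33/16) (c iY 0) with hHY | hlY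
    · refine mk iY eu (-ev) heu hev' hHY (by linarith) (by linarith) ?_
      rintro ⟨h1, h2⟩
      rcases hev with h|h <;> rw [h] at h2 <;> norm_num at h2
    exfalso
    have mknorm : ∀ i : Fin m, 0 ≤ c i 0 →
        c i 0 + |(-eu) * c i 1| + |(-ev) * c i 2| ≤ 4 ∧
        31/8 < c i 0 + |(-eu) * c i 1| + |(-ev) * c i 2| := by
      intro i h
      rw [abs_twist' heu', abs_twist' hev']
      have e := abs_of_nonneg h
      constructor
      · have := nrm4 i; linarith
      · have := sep0 i; linarith
    obtain ⟨nS1, nS2⟩ := mknorm iS (by linarith)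
    obtain ⟨nT1, nT2⟩ := mknorm iT (by linarith)
    obtain ⟨nU1, nU2⟩ := mknorm iU (by linarith)
    obtain ⟨nX1, nX2⟩ := mknorm iX (by linarith)
    obtain ⟨nY1, nY2⟩ := mknorm iY (by linarith)
    have mksep : ∀ i j : Fin m,
        (31/8 < |c i 0 - c j 0| + |(-eu)*c i 1 - (-eu)*c j 1| + |(-ev)*c i 2 - (-ev)*c j 2|) ∨
        (c i 0 = c j 0 ∧ (-eu)*c i 1 = (-eu)*c j 1 ∧ (-ev)*c i 2 = (-ev)*c j 2) := by
      intro i j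
      by_cases hij : i = j
      · subst hij; exact Or.inr ⟨rfl, rfl, rfl⟩
      · left; rw [abs_twist heu', abs_twist hev']; exact sep i j hij
    refine core5 (c iS 0) ((-eu)*c iS 1) ((-ev)*c iS 2)
      (c iT 0) ((-eu)*c iT 1) ((-ev)*c iT 2)
      (c iU 0) ((-eu)*c iU 1) ((-ev)*c iU 2)
      (c iX 0) ((-eu)*c iX 1) ((-ev)*c iX 2)
      (c iY 0) ((-eu)*c iY 1) ((-ev)*c iY 2)
      (by linarith) (by linarith) (by linarith)
      (by linarith) (by linarith) ?_
      (by linarith) ?_ (by linarith)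
      (by linarith) (by linarith) ?_
      (by linarith) ?_ (by linarith)
      nS1 nT1 nU1 nX1 nY1 nS2 nT2 nU2 nX2 nY2
      hlS hlT hlU hlX hlY
      (mksep iT iS) (mksep iX iS) (mksep iX iT) (mksep iU iS) (mksep iY iS) (mksep iY iU)
    · have e : (-ev) * c iT 2 = -(ev * c iT 2) := by ring
      rw [e]; linarith
    · have e : (-eu) * c iU 1 = -(eu * c iU 1) := by ring
      rw [e]; linarith
    · have e : (-ev) * c iX 2 = -(ev * c iX 2) := by ring
      rw [e]; linarith
    · have e : (-eu) * c iY 1 = -(eu * c iY 1) := by ring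
      rw [e]; linarith
  obtain ⟨i1, h1p, h1a, h1b, h1n⟩ := exH 1 1 (Or.inl rfl) (Or.inl rfl)
  obtain ⟨i2, h2p, _, _, h2n⟩ := exH 1 (-1) (Or.inl rfl) (Or.inr rfl)
  obtain ⟨i3, h3p, _, _, h3n⟩ := exH (-1) 1 (Or.inr rfl) (Or.inl rfl)
  obtain ⟨i4, h4p, _, _, h4n⟩ := exH (-1) (-1) (Or.inr rfl) (Or.inr rfl)
  have e2 : i2 = i1 := heavyEq i2 i1 h2p h1p
  have e3 : i3 = i1 := heavyEq i3 i1 h3p h1p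
  have e4 : i4 = i1 := heavyEq i4 i1 h4p h1p
  subst e2; subst e3; subst e4
  rcases lt_or_gt_of_ne h1a with hc1 | hc1 <;> rcases lt_or_gt_of_ne h1b with hc2 | hc2
  · exact h4n ⟨by simp only [neg_one_mul]; linarith, by simp only [neg_one_mul]; linarith⟩
  · exact h3n ⟨by simp only [neg_one_mul]; linarith, by simp only [one_mul]; linarith⟩
  · exact h2n ⟨by simp only [one_mul]; linarith, by simp only [neg_one_mul]; linarith⟩
  · exact h1n ⟨by simp only [one_mul]; linarith, by simp only [one_mul]; linarith⟩
end
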